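/- arXiv:2012.13132 — 2 statements merged into one kernel-verified Lean document; each statement's English description precedes it below -/
import Mathlib

section
/- If B₁ ⊆_{S,P,+} B₂ (positive shift inclusion), then for every image g : P → ℝ≥0, the zero set of the closing via B₂ is contained in that of the closing via B₁: C_{B₂}(g)⁻¹(0) ⊆ C_{B₁}(g)⁻¹(0). -/
open scoped NNReal

variable {M : Type*} [AddCommGroup M]

/-- Erosion of an image `g` on pixel set `P` via structuring element `B`. -/
noncomputable def mErosion (P : Set M) (B : Finset M) (g : M → ℝ≥0) : M → ℝ≥0 :=
  fun x => sInf {y | ∃ b ∈ B, x + b ∈ P ∧ g (x + b) = y}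

/-- Dilation of an image `g` on pixel set `P` via structuring element `B`. -/
noncomputable def mDilation (P : Set M) (B : Finset M) (g : M → ℝ≥0) : M → ℝ≥0 :=
  fun x => sSup {y | ∃ b ∈ B, x - b ∈ P ∧ g (x - b) = y}

/-- Morphological opening. -/
noncomputable def mOpening (P : Set M) (B : Finset M) (g : M → ℝ≥0) : M → ℝ≥0 :=
  mDilation P B (mErosion P B g)

/-- Morphological closing. -/
noncomputable def mClosing (P : Set M) (B : Finset M) (g : M → ℝ≥0) : M → ℝ≥0 :=
  mErosion P B (mDilation P B g)

/-- Thresholding operator `τ_t`. -/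
noncomputable def mThreshold (t : ℝ≥0) (g : M → ℝ≥0) : M → ℝ≥0 :=
  fun x => if g x ≤ t then 0 else 1

/-- Positive shift inclusion condition `B₁ ⊆_{S,P,+} B₂` (without the subset requirement). -/
def shiftPos (P : Set M) (B₁ B₂ : Finset M) : Prop :=
  ∀ x ∈ P, ∀ b₂ ∈ B₂, x + b₂ ∈ P →
    ∃ b₁ ∈ B₁, x + b₁ ∈ P ∧ ∀ b ∈ B₁, b + (b₂ - b₁) ∈ B₂

/-- Negative shift inclusion condition `B₁ ⊆_{S,P,−} B₂` (without the subset requirement). -/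
def shiftNeg (P : Set M) (B₁ B₂ : Finset M) : Prop :=
  ∀ x ∈ P, ∀ b₂ ∈ B₂, x - b₂ ∈ P →
    ∃ b₁ ∈ B₁, x - b₁ ∈ P ∧ ∀ b ∈ B₁, b + (b₂ - b₁) ∈ B₂

/-
If `C_{B₂} g` vanishes at `x`, the erosion attains the value `0` at some `x + b₂ ∈ P`, so `g`
vanishes on the whole `B₂`-window `x + b₂ - B₂`. Shift inclusion supplies `b₁ ∈ B₁` with
`x + b₁ ∈ P` and `x + b₁ - B₁ ⊆ x + b₂ - B₂`, so `δ_{B₁} g (x + b₁) = 0` and hence `C_{B₁} g x = 0`.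
-/

theorem Finset.finite_setOf_exists_mem {α β : Type*} (s : Finset α) (p : α → Prop) (f : α → β) :
    {y | ∃ a ∈ s, p a ∧ f a = y}.Finite :=
  (s.finite_toSet.image f).subset (by rintro y ⟨a, ha, -, rfl⟩; exact ⟨a, ha, rfl⟩)

section Morphology

variable {P : Set M} {B : Finset M} {f : M → ℝ≥0} {x b : M}

theorem mErosion_le (hb : b ∈ B) (hxb : x + b ∈ P) : mErosion P B f x ≤ f (x + b) :=
  csInf_le (OrderBot.bddBelow _) ⟨b, hb, hxb, rfl⟩

theorem exists_eq_zero_of_mErosion_eq_zero (hne : ∃ b ∈ B, x + b ∈ P)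
    (h : mErosion P B f x = 0) : ∃ b ∈ B, x + b ∈ P ∧ f (x + b) = 0 := by
  obtain ⟨b, hb, hxb⟩ := hne
  have hmin := Set.Nonempty.csInf_mem (s := {y | ∃ b ∈ B, x + b ∈ P ∧ f (x + b) = y})
    ⟨_, b, hb, hxb, rfl⟩ (B.finite_setOf_exists_mem (fun b => x + b ∈ P) (fun b => f (x + b)))
  rwa [← mErosion, h] at hmin

theorem mDilation_eq_zero_iff :
    mDilation P B f x = 0 ↔ ∀ b ∈ B, x - b ∈ P → f (x - b) = 0 := by
  have hbdd := (B.finite_setOf_exists_mem (fun b => x - b ∈ P) (fun b => f (x - b))).bddAbove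
  constructor
  · intro h b hb hxb
    exact nonpos_iff_eq_zero.mp (h ▸ le_csSup hbdd ⟨b, hb, hxb, rfl⟩)
  · intro h
    refine nonpos_iff_eq_zero.mp (csSup_le' ?_)
    rintro _ ⟨b, hb, hxb, rfl⟩
    exact (h b hb hxb).le

end Morphology

theorem closing_zero_antimono_of_shiftPos_general (P : Set M) (B₁ B₂ : Finset M)
    (h2 : (0 : M) ∈ B₂)
    (hS : shiftPos P B₁ B₂) :
    ∀ (g : M → ℝ≥0), ∀ x ∈ P, mClosing P B₂ g x = 0 → mClosing P B₁ g x = 0 := by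
  intro g x hx hC₂
  obtain ⟨b₂, hb₂, hxb₂, hd₂⟩ :=
    exists_eq_zero_of_mErosion_eq_zero ⟨0, h2, by rwa [add_zero]⟩ hC₂
  obtain ⟨b₁, hb₁, hxb₁, hshift⟩ := hS x hx b₂ hb₂ hxb₂
  refine nonpos_iff_eq_zero.mp ((mErosion_le hb₁ hxb₁).trans_eq ?_)
  rw [mDilation_eq_zero_iff] at hd₂ ⊢
  intro b hb hxb
  have hwindow : x + b₁ - b = x + b₂ - (b + (b₂ - b₁)) := by abel
  rw [hwindow] at hxb ⊢
  exact hd₂ _ (hshift b hb) hxb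

/-- Positive shift inclusion implies the zero sets of closings are reverse-nested. -/
theorem closing_zero_antimono_of_shiftPos (P : Set M) (B₁ B₂ : Finset M)
    (h1 : (0 : M) ∈ B₁) (h2 : (0 : M) ∈ B₂) (hsub : B₁ ⊆ B₂)
    (hS : shiftPos P B₁ B₂) :
    ∀ (g : M → ℝ≥0), ∀ x ∈ P, mClosing P B₂ g x = 0 → mClosing P B₁ g x = 0 :=
  closing_zero_antimono_of_shiftPos_general P B₁ B₂ h2 hS
end

section
/- On the whole group (P = M), B₁ ⊆_{S,M} B₂ holds if and only if C_{B₂}(g)⁻¹(0) ⊆ C_{B₁}(g)⁻¹(0) for every image g : M → ℝ≥0, where C_B = ε_B ∘ δ_B is the closing. -/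
open scoped NNReal

variable {M : Type*} [AddCommGroup M]

/-!
On the whole group, `C_B g x = 0` exactly when some translate `x + b - B` (`b ∈ B`) lies in the
zero set of `g`. Shift inclusion turns such a translate for `B₂` into one for `B₁`, because
`B₁ + (b₂ - b₁) ⊆ B₂`. Conversely, the image vanishing exactly on `b₂ - B₂` has `B₂`-closing
zero at `0`; a translate `b₁ - B₁` inside its zero set is precisely the shift inclusion at `b₂`.
-/

theorem Set.Finite.csSup_eq_bot_iff {α : Type*} [ConditionallyCompleteLinearOrderBot α]
    {s : Set α} (hs : s.Finite) : sSup s = ⊥ ↔ ∀ a ∈ s, a = ⊥ := by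
  simp only [← le_bot_iff, csSup_le_iff' hs.bddAbove]

theorem mErosion_univ_eq_zero_iff {B : Finset M} (hB : B.Nonempty) (g : M → ℝ≥0) (x : M) :
    mErosion Set.univ B g x = 0 ↔ ∃ b ∈ B, g (x + b) = 0 := by
  have hset : {y | ∃ b ∈ B, x + b ∈ Set.univ ∧ g (x + b) = y} = (fun b => g (x + b)) '' B := by
    simp [Set.image]
  rw [mErosion, hset]
  constructor
  · intro h
    simpa [h] using (hB.to_set.image (fun b => g (x + b))).csInf_mem (B.finite_toSet.image _)
  · rintro ⟨b, hb, hgb⟩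
    exact le_antisymm (hgb ▸ csInf_le (OrderBot.bddBelow _) ⟨b, hb, rfl⟩) zero_le

theorem mDilation_univ_eq_zero_iff (B : Finset M) (g : M → ℝ≥0) (x : M) :
    mDilation Set.univ B g x = 0 ↔ ∀ b ∈ B, g (x - b) = 0 := by
  have hset : {y | ∃ b ∈ B, x - b ∈ Set.univ ∧ g (x - b) = y} = (fun b => g (x - b)) '' B := by
    simp [Set.image]
  rw [mDilation, hset, ← bot_eq_zero, (B.finite_toSet.image _).csSup_eq_bot_iff]
  simp

theorem mClosing_univ_eq_zero_iff {B : Finset M} (hB : B.Nonempty) (g : M → ℝ≥0) (x : M) :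
    mClosing Set.univ B g x = 0 ↔ ∃ b ∈ B, ∀ b' ∈ B, g (x + b - b') = 0 := by
  simp only [mClosing, mErosion_univ_eq_zero_iff hB, mDilation_univ_eq_zero_iff]

theorem mClosing_univ_eq_zero_of_shiftIncl {B₁ B₂ : Finset M} (hB₂ : B₂.Nonempty)
    (hshift : ∀ b₂ ∈ B₂, ∃ b₁ ∈ B₁, ∀ b ∈ B₁, b + (b₂ - b₁) ∈ B₂) {g : M → ℝ≥0} {x : M}
    (hx : mClosing Set.univ B₂ g x = 0) : mClosing Set.univ B₁ g x = 0 := by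
  obtain ⟨b₂, hb₂, hzero⟩ := (mClosing_univ_eq_zero_iff hB₂ g x).mp hx
  obtain ⟨b₁, hb₁, hsub⟩ := hshift b₂ hb₂
  refine (mClosing_univ_eq_zero_iff ⟨b₁, hb₁⟩ g x).mpr ⟨b₁, hb₁, fun b hb => ?_⟩
  simpa [show x + b₂ - (b + (b₂ - b₁)) = x + b₁ - b by abel] using hzero _ (hsub b hb)

open Classical in
noncomputable def shiftTestImage (B₂ : Finset M) (b₂ : M) : M → ℝ≥0 :=
  fun y => if b₂ - y ∈ B₂ then 0 else 1

theorem shiftTestImage_eq_zero_iff {B₂ : Finset M} {b₂ y : M} :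
    shiftTestImage B₂ b₂ y = 0 ↔ b₂ - y ∈ B₂ := by
  simp [shiftTestImage]

theorem mClosing_univ_shiftTestImage_zero {B₂ : Finset M} {b₂ : M} (hb₂ : b₂ ∈ B₂) :
    mClosing Set.univ B₂ (shiftTestImage B₂ b₂) 0 = 0 :=
  (mClosing_univ_eq_zero_iff ⟨b₂, hb₂⟩ _ 0).mpr
    ⟨b₂, hb₂, fun b' hb' => shiftTestImage_eq_zero_iff.mpr (by simpa using hb')⟩

theorem shiftIncl_of_mClosing_univ_eq_zero {B₁ B₂ : Finset M} (hB₁ : B₁.Nonempty)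
    (hclosing : ∀ (g : M → ℝ≥0) (x : M),
      mClosing Set.univ B₂ g x = 0 → mClosing Set.univ B₁ g x = 0) :
    ∀ b₂ ∈ B₂, ∃ b₁ ∈ B₁, ∀ b ∈ B₁, b + (b₂ - b₁) ∈ B₂ := by
  intro b₂ hb₂
  obtain ⟨b₁, hb₁, hzero⟩ := (mClosing_univ_eq_zero_iff hB₁ _ 0).mp
    (hclosing _ 0 (mClosing_univ_shiftTestImage_zero hb₂))
  refine ⟨b₁, hb₁, fun b hb => ?_⟩
  simpa [show b₂ - (b₁ - b) = b + (b₂ - b₁) by abel] using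
    shiftTestImage_eq_zero_iff.mp (hzero b hb)

theorem shiftIncl_iff_closing_zero_antimono_general (B₁ B₂ : Finset M)
    (h1 : (0 : M) ∈ B₁) (h2 : (0 : M) ∈ B₂) :
    (∀ b₂ ∈ B₂, ∃ b₁ ∈ B₁, ∀ b ∈ B₁, b + (b₂ - b₁) ∈ B₂) ↔
      ∀ (g : M → ℝ≥0) (x : M),
        mClosing (Set.univ : Set M) B₂ g x = 0 → mClosing (Set.univ : Set M) B₁ g x = 0 :=
  ⟨fun hshift _ _ => mClosing_univ_eq_zero_of_shiftIncl ⟨0, h2⟩ hshift,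
    shiftIncl_of_mClosing_univ_eq_zero ⟨0, h1⟩⟩

/-- On the whole group, shift inclusion is equivalent to reverse nesting of closing zero sets. -/
theorem shiftIncl_iff_closing_zero_antimono (B₁ B₂ : Finset M)
    (h1 : (0 : M) ∈ B₁) (h2 : (0 : M) ∈ B₂) (hsub : B₁ ⊆ B₂) :
    (∀ b₂ ∈ B₂, ∃ b₁ ∈ B₁, ∀ b ∈ B₁, b + (b₂ - b₁) ∈ B₂) ↔
      ∀ (g : M → ℝ≥0) (x : M),
        mClosing (Set.univ : Set M) B₂ g x = 0 → mClosing (Set.univ : Set M) B₁ g x = 0 :=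
  shiftIncl_iff_closing_zero_antimono_general B₁ B₂ h1 h2
end
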